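/- Let ν = (ν_{ij}) be an N×N matrix with nonnegative entries that is irreducible (for all i, j there exists k ≥ 1 with (ν^k)_{ij} > 0), and consider the modified iterative law P_{i,k+1} = A (∑_{j=1}^N l_{ij} P_{j,k}^{-1} + ν_{ij} C_jᵀ R_j^{-1} C_j)^{-1} Aᵀ + Q. Then for any positive definite initial matrices P_{1,0}, …, P_{N,0}, there exist a natural number k̄ and a positive definite n×n matrix P such that P_{i,k} ≤ P (in the Loewner order) for all i ∈ {1, …, N} and all k ≥ k̄. -/

import Mathlib

/-!
Pass to the information matrices `Y = P⁻¹`. From the first step on `Q ≤ P`, so the fused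
information `S_i = ∑_j (l_ij Y_j + ν_ij G_j)`, `G_j = C_jᵀ R_j⁻¹ C_j`, stays below
`B = Q⁻¹ + ∑_ij ν_ij G_j`. Choosing `μ > 0` with `Q ≤ μ A B⁻¹ Aᵀ` gives
`A S_i⁻¹ Aᵀ + Q ≤ (1 + μ) A S_i⁻¹ Aᵀ`, i.e. the linear lower recursion
`Y_i' ≥ γ A⁻ᵀ S_i A⁻¹` with `γ = (1 + μ)⁻¹`. Unrolled, it bounds `Y_i` below by a sum of terms
`γ^(s+1) (A^{-(s+1)})ᵀ (∑_j (L^s ν)_ij G_j) A^{-(s+1)}`. Primitivity of `L` and irreducibility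
of `ν` make every weight `(L^s ν)_ij` positive once `s ≥ K`, and collective observability then
makes the `n` terms with `K ≤ s < K + n` jointly positive definite. Inverting this uniform lower
bound bounds `P`.
-/

open Matrix Finset
open scoped MatrixOrder ComplexOrder

namespace Matrix

section RCLike
variable {n 𝕜 : Type*} [RCLike 𝕜]

theorem PosDef.of_le {X Y : Matrix n n 𝕜} (hX : X.PosDef) (hXY : X ≤ Y) : Y.PosDef := by
  simpa using hX.add_posSemidef hXY

variable [Fintype n]

theorem exists_le_smul_of_posDef {S D : Matrix n n 𝕜} (hS : S.IsHermitian) (hD : D.PosDef) :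
    ∃ μ > (0 : ℝ), S ≤ μ • D := by
  rcases subsingleton_or_nontrivial (Matrix n n 𝕜) with _ | _
  · exact ⟨1, one_pos, (Subsingleton.elim S _).le⟩
  classical
  obtain ⟨ε, hε, hεD⟩ := (CFC.exists_pos_algebraMap_le_iff hD.isHermitian.isSelfAdjoint).2
    fun x hx => hD.isStrictlyPositive.spectrum_pos hx
  obtain ⟨r, hr⟩ := (isCompact_iff_compactSpace (s := spectrum ℝ S)).2 inferInstance |>.bddAbove
  have hSr : S ≤ algebraMap ℝ _ (max r 1) :=
    le_algebraMap_of_spectrum_le (fun x hx => (hr hx).trans (le_max_left _ _)) hS.isSelfAdjoint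
  refine ⟨max r 1 / ε, by positivity, hSr.trans ?_⟩
  calc algebraMap ℝ (Matrix n n 𝕜) (max r 1) = (max r 1 / ε) • algebraMap ℝ _ ε := by
        rw [Algebra.smul_def, ← map_mul, div_mul_cancel₀ _ hε.ne']
    _ ≤ _ := smul_le_smul_of_nonneg_left hεD (by positivity)

variable [DecidableEq n]

theorem inv_le_inv_of_le {X Y : Matrix n n 𝕜} (hX : X.PosDef) (hXY : X ≤ Y) : Y⁻¹ ≤ X⁻¹ := by
  have hY := hX.of_le hXY
  let := hX.isUnit.invertible
  let := hY.isUnit.invertible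
  let := hX.inv.isUnit.invertible
  -- `fromBlocks Y 1 1 X⁻¹` has Schur complements `Y - X` and `X⁻¹ - Y⁻¹`.
  have h := (PosDef.fromBlocks₂₂ Y 1 hX.inv).2 (by simpa using le_iff.1 hXY)
  rw [le_iff]
  simpa using (PosDef.fromBlocks₁₁ 1 X⁻¹ hY).1 (by simpa using h)

theorem le_inv_of_le_inv {X W : Matrix n n 𝕜} (hX : X.PosDef) (hW : W.PosDef) (h : W ≤ X⁻¹) :
    X ≤ W⁻¹ := by
  simpa [nonsing_inv_nonsing_inv _ ((isUnit_iff_isUnit_det X).1 hX.isUnit)]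
    using inv_le_inv_of_le hW h

end RCLike

section Real
variable {m n : Type*} [Fintype m] [Fintype n]

theorem PosSemidef.transpose_mul_mul_same {X : Matrix m m ℝ} (hX : X.PosSemidef)
    (B : Matrix m n ℝ) : (Bᵀ * X * B).PosSemidef := by
  simpa using hX.conjTranspose_mul_mul_same B

theorem transpose_mul_mul_le_transpose_mul_mul {X Y : Matrix m m ℝ} (hXY : X ≤ Y)
    (B : Matrix m n ℝ) : Bᵀ * X * B ≤ Bᵀ * Y * B := by
  simpa [le_iff, Matrix.mul_sub, Matrix.sub_mul] using (le_iff.1 hXY).transpose_mul_mul_same B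

theorem dotProduct_transpose_mul_mul_mulVec (B : Matrix m n ℝ) (X : Matrix m m ℝ) (x : n → ℝ) :
    x ⬝ᵥ (Bᵀ * X * B) *ᵥ x = (B *ᵥ x) ⬝ᵥ X *ᵥ (B *ᵥ x) := by
  rw [← mulVec_mulVec, ← mulVec_mulVec, dotProduct_mulVec, vecMul_transpose]

theorem dotProduct_mulVec_sum_pos {α : Type*} {s : Finset α} {M : α → Matrix n n ℝ}
    (hM : ∀ a ∈ s, (M a).PosSemidef) {a : α} (ha : a ∈ s) {x : n → ℝ}
    (hx : 0 < x ⬝ᵥ M a *ᵥ x) : 0 < x ⬝ᵥ (∑ a ∈ s, M a) *ᵥ x := by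
  rw [sum_mulVec, dotProduct_sum]
  exact sum_pos' (fun b hb => by simpa using (hM b hb).dotProduct_mulVec_nonneg x) ⟨a, ha, hx⟩

section
variable [DecidableEq n]

theorem PosDef.mul_mul_transpose_of_isUnit {X : Matrix n n ℝ} (hX : X.PosDef) {U : Matrix n n ℝ}
    (hU : IsUnit U.det) : (U * X * Uᵀ).PosDef := by
  simpa [star_eq_conjTranspose] using
    (IsUnit.posDef_star_right_conjugate_iff ((isUnit_iff_isUnit_det U).2 hU)).2 hX

theorem smul_transpose_inv_mul_mul_inv_le {A S B Q : Matrix n n ℝ} (hA : IsUnit A.det)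
    (hS : S.PosDef) (hSB : S ≤ B) (hQ : Q.PosSemidef) {μ : ℝ} (hμ : 0 < μ)
    (hQB : Q ≤ μ • (A * B⁻¹ * Aᵀ)) :
    (1 + μ)⁻¹ • ((A⁻¹)ᵀ * S * A⁻¹) ≤ (A * S⁻¹ * Aᵀ + Q)⁻¹ := by
  have hconj : A * B⁻¹ * Aᵀ ≤ A * S⁻¹ * Aᵀ := by
    simpa using transpose_mul_mul_le_transpose_mul_mul (inv_le_inv_of_le hS hSB) Aᵀ
  have hle : A * S⁻¹ * Aᵀ + Q ≤ (1 + μ) • (A * S⁻¹ * Aᵀ) :=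
    calc A * S⁻¹ * Aᵀ + Q ≤ A * S⁻¹ * Aᵀ + μ • (A * S⁻¹ * Aᵀ) :=
          add_le_add le_rfl (hQB.trans (smul_le_smul_of_nonneg_left hconj hμ.le))
      _ = (1 + μ) • (A * S⁻¹ * Aᵀ) := by rw [add_smul, one_smul]
  have hD := hS.inv.mul_mul_transpose_of_isUnit hA
  have hinv := inv_le_inv_of_le (hD.add_posSemidef hQ) hle
  let := invertibleOfNonzero (by positivity : (1 : ℝ) + μ ≠ 0)
  rwa [inv_smul _ _ hD.det_pos.ne'.isUnit, invOf_eq_inv,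
    mul_inv_rev, mul_inv_rev, ← transpose_nonsing_inv,
    nonsing_inv_nonsing_inv _ hS.det_pos.ne'.isUnit, ← Matrix.mul_assoc] at hinv

theorem pow_mul_inv_pow_add {A : Matrix n n ℝ} (hA : IsUnit A.det) (r k : ℕ) :
    A ^ r * A⁻¹ ^ (r + k) = A⁻¹ ^ k := by
  rw [pow_add, ← Matrix.mul_assoc, inv_pow', mul_nonsing_inv _ (by rw [det_pow]; exact hA.pow r),
    Matrix.one_mul]

theorem exists_mulVec_pow_mulVec_ne_zero {ι : Type*} [Fintype ι]
    {p : ι → Type*} [∀ j, Fintype (p j)] {A : Matrix n n ℝ} {C : ∀ j, Matrix (p j) n ℝ} {d : ℕ}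
    (hObs : (∑ r ∈ range d, (A ^ r)ᵀ * (∑ j, (C j)ᵀ * C j) * A ^ r).PosDef)
    {y : n → ℝ} (hy : y ≠ 0) : ∃ r < d, ∃ j, C j *ᵥ (A ^ r *ᵥ y) ≠ 0 := by
  by_contra! h
  have hzero : (∑ r ∈ range d, (A ^ r)ᵀ * (∑ j, (C j)ᵀ * C j) * A ^ r) *ᵥ y = 0 := by
    rw [sum_mulVec]
    refine sum_eq_zero fun r hr => ?_
    simp [← mulVec_mulVec, sum_mulVec, h r (mem_range.1 hr)]
  have hpos := hObs.dotProduct_mulVec_pos hy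
  rw [hzero] at hpos
  simp at hpos

end

end Real

section Nonneg
variable {ι : Type*} [Fintype ι]

theorem mul_apply_pos {M N : Matrix ι ι ℝ} (hM : ∀ i j, 0 ≤ M i j) (hN : ∀ i j, 0 ≤ N i j)
    {i p j : ι} (hip : 0 < M i p) (hpj : 0 < N p j) : 0 < (M * N) i j :=
  sum_pos' (fun q _ => mul_nonneg (hM i q) (hN q j)) ⟨p, mem_univ p, mul_pos hip hpj⟩

theorem sum_smul_sum_smul {R E : Type*} [Semiring R] [AddCommMonoid E] [Module R E]
    (L M : Matrix ι ι R) (G : ι → E) (i : ι) :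
    ∑ j, L i j • ∑ p, M j p • G p = ∑ p, (L * M) i p • G p := by
  simp only [mul_apply, smul_sum, smul_smul, sum_smul]
  exact sum_comm

variable [DecidableEq ι]

theorem exists_apply_pos_of_mem_rowStochastic {M : Matrix ι ι ℝ} (hM : M ∈ rowStochastic ℝ ι)
    (i : ι) : ∃ j, 0 < M i j := by
  by_contra! h
  linarith [sum_row_of_mem_rowStochastic hM i, sum_nonpos fun j (_ : j ∈ univ) => h j]

theorem exists_apply_pos_of_pow_apply_pos {M : Matrix ι ι ℝ} (hM : ∀ i j, 0 ≤ M i j)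
    {k : ℕ} {i j : ι} (hk : 1 ≤ k) (h : 0 < (M ^ k) i j) : ∃ p, 0 < M p j := by
  obtain ⟨k, rfl⟩ := Nat.exists_eq_add_of_le' hk
  rw [pow_succ, mul_apply] at h
  obtain ⟨p, -, hp⟩ := exists_ne_zero_of_sum_ne_zero h.ne'
  exact ⟨p, (hM p j).lt_of_ne' (right_ne_zero_of_mul hp)⟩

theorem pow_mul_apply_nonneg {L ν : Matrix ι ι ℝ} (hL : L ∈ rowStochastic ℝ ι)
    (hν : ∀ i j, 0 ≤ ν i j) (s : ℕ) (i j : ι) : 0 ≤ (L ^ s * ν) i j :=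
  sum_nonneg fun q _ => mul_nonneg ((pow_mem hL s).1 i q) (hν q j)

theorem pow_mul_apply_pos {L ν : Matrix ι ι ℝ} (hL : L ∈ rowStochastic ℝ ι)
    (hν : ∀ i j, 0 ≤ ν i j) (hνcol : ∀ j, ∃ p, 0 < ν p j) {K : ℕ}
    (hK : ∀ i j, 0 < (L ^ K) i j) (s : ℕ) (hs : K ≤ s) (i j : ι) : 0 < (L ^ s * ν) i j := by
  obtain ⟨t, rfl⟩ := Nat.exists_eq_add_of_le hs
  obtain ⟨p, hp⟩ := hνcol j
  have hLt := pow_mem hL t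
  obtain ⟨q, hq⟩ := exists_apply_pos_of_mem_rowStochastic hLt i
  rw [add_comm, pow_add]
  exact mul_apply_pos (mul_mem hLt (pow_mem hL K)).1 hν
    (mul_apply_pos hLt.1 (pow_mem hL K).1 hq (hK q p)) hp

end Nonneg

end Matrix

namespace HCRE

variable {n ι : Type*} [Fintype n] [Fintype ι]
  {A Q : Matrix n n ℝ} {L ν : Matrix ι ι ℝ} {G : ι → Matrix n n ℝ}

-- The fused information matrix of agent `i` when agent `j` holds the information `Y j = (P j)⁻¹`.
def info (L ν : Matrix ι ι ℝ) (G Y : ι → Matrix n n ℝ) (i : ι) : Matrix n n ℝ :=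
  ∑ j, (L i j • Y j + ν i j • G j)

theorem info_mono (hL : ∀ i j, 0 ≤ L i j) {Y Y' : ι → Matrix n n ℝ} (hY : ∀ j, Y j ≤ Y' j)
    (i : ι) : info L ν G Y i ≤ info L ν G Y' i :=
  sum_le_sum fun j _ => add_le_add (smul_le_smul_of_nonneg_left (hY j) (hL i j)) le_rfl

variable [DecidableEq n] [DecidableEq ι]

theorem info_posDef (hL : L ∈ rowStochastic ℝ ι) (hν : ∀ i j, 0 ≤ ν i j)
    (hG : ∀ j, (G j).PosSemidef) {Y : ι → Matrix n n ℝ} (hY : ∀ j, (Y j).PosDef) (i : ι) :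
    (info L ν G Y i).PosDef := by
  obtain ⟨j, hj⟩ := exists_apply_pos_of_mem_rowStochastic hL i
  have hterm : ∀ k, 0 ≤ L i k • Y k + ν i k • G k := fun k =>
    add_nonneg (smul_nonneg (hL.1 i k) (hY k).posSemidef.nonneg)
      (smul_nonneg (hν i k) (hG k).nonneg)
  refine ((hY j).smul hj).of_le ?_
  calc L i j • Y j ≤ L i j • Y j + ν i j • G j :=
        le_add_of_nonneg_right (smul_nonneg (hν i j) (hG j).nonneg)
    _ ≤ info L ν G Y i := single_le_sum (fun k _ => hterm k) (mem_univ j)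

theorem info_le (hL : L ∈ rowStochastic ℝ ι) (hν : ∀ i j, 0 ≤ ν i j)
    (hG : ∀ j, (G j).PosSemidef) {Y : ι → Matrix n n ℝ} (hY : ∀ j, Y j ≤ Q⁻¹) (i : ι) :
    info L ν G Y i ≤ Q⁻¹ + ∑ i', ∑ j, ν i' j • G j := by
  have hνG : ∀ i', 0 ≤ ∑ j, ν i' j • G j := fun i' =>
    sum_nonneg fun j _ => smul_nonneg (hν i' j) (hG j).nonneg
  calc info L ν G Y i ≤ info L ν G (fun _ => Q⁻¹) i := info_mono hL.1 hY i
    _ = Q⁻¹ + ∑ j, ν i j • G j := by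
        rw [info, sum_add_distrib, ← sum_smul, sum_row_of_mem_rowStochastic hL, one_smul]
    _ ≤ Q⁻¹ + ∑ i', ∑ j, ν i' j • G j :=
        add_le_add le_rfl (single_le_sum (fun i' _ => hνG i') (mem_univ i))

variable {P : ℕ → ι → Matrix n n ℝ}

theorem posDef_of_iterate (hL : L ∈ rowStochastic ℝ ι) (hν : ∀ i j, 0 ≤ ν i j)
    (hG : ∀ j, (G j).PosSemidef) (hQ : Q.PosDef) (hP0 : ∀ i, (P 0 i).PosDef)
    (hP : ∀ k i, P (k + 1) i = A * (info L ν G (fun j => (P k j)⁻¹) i)⁻¹ * Aᵀ + Q)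
    (k : ℕ) (i : ι) : (P k i).PosDef := by
  induction k generalizing i with
  | zero => exact hP0 i
  | succ k ih =>
    rw [hP]
    refine PosDef.posSemidef_add ?_ hQ
    simpa using
      (info_posDef hL hν hG (fun j => (ih j).inv) i).inv.posSemidef.transpose_mul_mul_same Aᵀ

theorem smul_conj_info_le_inv_iterate (hA : IsUnit A.det) (hL : L ∈ rowStochastic ℝ ι)
    (hν : ∀ i j, 0 ≤ ν i j) (hG : ∀ j, (G j).PosSemidef) (hQ : Q.PosDef)
    (hPD : ∀ k i, (P k i).PosDef)
    (hP : ∀ k i, P (k + 1) i = A * (info L ν G (fun j => (P k j)⁻¹) i)⁻¹ * Aᵀ + Q)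
    {μ : ℝ} (hμ : 0 < μ) (hQB : Q ≤ μ • (A * (Q⁻¹ + ∑ i', ∑ j, ν i' j • G j)⁻¹ * Aᵀ))
    (k : ℕ) (i : ι) :
    (1 + μ)⁻¹ • ((A⁻¹)ᵀ * info L ν G (fun j => (P (k + 1) j)⁻¹) i * A⁻¹) ≤ (P (k + 2) i)⁻¹ := by
  have hinfo : ∀ k i, (info L ν G (fun j => (P k j)⁻¹) i).PosDef := fun k =>
    info_posDef hL hν hG fun j => (hPD k j).inv
  have hQP : ∀ j, Q ≤ P (k + 1) j := fun j => by
    rw [hP]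
    exact le_add_of_nonneg_left (nonneg_iff_posSemidef.2
      (by simpa using (hinfo k j).inv.posSemidef.transpose_mul_mul_same Aᵀ))
  rw [hP]
  exact smul_transpose_inv_mul_mul_inv_le hA (hinfo (k + 1) i)
    (info_le hL hν hG (fun j => inv_le_inv_of_le hQ (hQP j)) i) hQ.posSemidef hμ hQB

-- The contribution of the measurements taken `s + 1` steps earlier to agent `i`'s information,
-- in the linear lower recursion `Y ↦ γ A⁻ᵀ (L Y + ν G) A⁻¹`.
noncomputable def propagatedInfo (γ : ℝ) (A : Matrix n n ℝ) (L ν : Matrix ι ι ℝ)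
    (G : ι → Matrix n n ℝ) (s : ℕ) (i : ι) : Matrix n n ℝ :=
  γ ^ (s + 1) • ((A⁻¹ ^ (s + 1))ᵀ * (∑ j, (L ^ s * ν) i j • G j) * A⁻¹ ^ (s + 1))

variable {γ : ℝ}

theorem propagatedInfo_zero (i : ι) :
    propagatedInfo γ A L ν G 0 i = γ • ((A⁻¹)ᵀ * (∑ j, ν i j • G j) * A⁻¹) := by
  simp [propagatedInfo]

theorem propagatedInfo_succ (s : ℕ) (i : ι) :
    propagatedInfo γ A L ν G (s + 1) i
      = γ • ((A⁻¹)ᵀ * (∑ j, L i j • propagatedInfo γ A L ν G s j) * A⁻¹) := by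
  simp only [propagatedInfo, pow_succ' L s, Matrix.mul_assoc L, ← sum_smul_sum_smul, smul_sum,
    smul_smul, Matrix.mul_sum, Matrix.sum_mul, Matrix.mul_smul, Matrix.smul_mul]
  refine sum_congr rfl fun j _ => ?_
  rw [pow_succ' γ, pow_succ A⁻¹ (s + 1), transpose_mul]
  simp only [Matrix.mul_assoc]
  exact sum_congr rfl fun p _ => sum_congr rfl fun q _ => by congr 1; ring

theorem propagatedInfo_posSemidef (hγ : 0 ≤ γ) (hLν : ∀ s i j, 0 ≤ (L ^ s * ν) i j)
    (hG : ∀ j, (G j).PosSemidef) (s : ℕ) (i : ι) : (propagatedInfo γ A L ν G s i).PosSemidef :=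
  (PosSemidef.transpose_mul_mul_same (posSemidef_sum _ fun j _ => (hG j).smul (hLν s i j)) _).smul
    (pow_nonneg hγ _)

theorem sum_propagatedInfo_le (hL : ∀ i j, 0 ≤ L i j) (hγ : 0 ≤ γ)
    {Y : ℕ → ι → Matrix n n ℝ} (hY : ∀ i, 0 ≤ Y 0 i)
    (hstep : ∀ k i, γ • ((A⁻¹)ᵀ * info L ν G (Y k) i * A⁻¹) ≤ Y (k + 1) i) (t : ℕ) (i : ι) :
    ∑ s ∈ range t, propagatedInfo γ A L ν G s i ≤ Y t i := by
  induction t generalizing i with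
  | zero => simpa using hY i
  | succ t ih =>
    calc ∑ s ∈ range (t + 1), propagatedInfo γ A L ν G s i
        = γ • ((A⁻¹)ᵀ * info L ν G (fun j => ∑ s ∈ range t, propagatedInfo γ A L ν G s j) i
            * A⁻¹) := by
          simp only [sum_range_succ', propagatedInfo_succ, propagatedInfo_zero, info,
            sum_add_distrib, smul_sum, Matrix.mul_add, Matrix.add_mul, smul_add, Matrix.mul_sum,
            Matrix.sum_mul]
          rw [sum_comm]
      _ ≤ γ • ((A⁻¹)ᵀ * info L ν G (Y t) i * A⁻¹) :=
          smul_le_smul_of_nonneg_left (transpose_mul_mul_le_transpose_mul_mul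
            (info_mono hL ih i) _) hγ
      _ ≤ Y (t + 1) i := hstep t i

theorem posDef_sum_propagatedInfo {p : ι → Type*} [∀ j, Fintype (p j)] [∀ j, DecidableEq (p j)]
    {C : ∀ j, Matrix (p j) n ℝ} {R : ∀ j, Matrix (p j) (p j) ℝ} {d K : ℕ} (hA : IsUnit A.det)
    (hγ : 0 < γ) (hR : ∀ j, (R j).PosDef)
    (hObs : (∑ r ∈ range d, (A ^ r)ᵀ * (∑ j, (C j)ᵀ * C j) * A ^ r).PosDef)
    (hLν : ∀ s i j, 0 ≤ (L ^ s * ν) i j) (hpos : ∀ s, K ≤ s → ∀ i j, 0 < (L ^ s * ν) i j)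
    (i : ι) :
    (∑ s ∈ range (K + d),
      propagatedInfo γ A L ν (fun j => (C j)ᵀ * (R j)⁻¹ * C j) s i).PosDef := by
  have hG : ∀ j, ((C j)ᵀ * (R j)⁻¹ * C j).PosSemidef := fun j =>
    (hR j).inv.posSemidef.transpose_mul_mul_same (C j)
  have hT := propagatedInfo_posSemidef (A := A) hγ.le hLν hG
  refine PosDef.of_dotProduct_mulVec_pos (posSemidef_sum _ fun s _ => hT s i).isHermitian
    fun x hx => ?_
  rw [star_trivial]
  -- Observability sees `y = A^{-(K+d)} x` through some `C_j A^r`, and so does the term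
  -- `s = K + d - 1 - r`, since `A^{-(s+1)} x = A^r y`.
  have hy : A⁻¹ ^ (K + d) *ᵥ x ≠ 0 := fun h => hx <| by
    rw [← one_mulVec x, ← pow_zero A⁻¹, ← pow_mul_inv_pow_add hA (K + d) 0, ← mulVec_mulVec,
      add_zero, h, mulVec_zero]
  obtain ⟨r, hr, j, hj⟩ := exists_mulVec_pow_mulVec_ne_zero hObs hy
  have hw : A⁻¹ ^ (K + d - 1 - r + 1) *ᵥ x = A ^ r *ᵥ (A⁻¹ ^ (K + d) *ᵥ x) := by
    rw [mulVec_mulVec, ← pow_mul_inv_pow_add hA r, show r + (K + d - 1 - r + 1) = K + d by omega]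
  refine dotProduct_mulVec_sum_pos (fun s _ => hT s i)
    (mem_range.2 (show K + d - 1 - r < K + d by omega)) ?_
  rw [propagatedInfo, smul_mulVec, dotProduct_smul, smul_eq_mul,
    dotProduct_transpose_mul_mul_mulVec, hw]
  refine mul_pos (pow_pos hγ _) (dotProduct_mulVec_sum_pos
    (fun q _ => (hG q).smul (hLν _ i q)) (mem_univ j) ?_)
  rw [smul_mulVec, dotProduct_smul, smul_eq_mul, dotProduct_transpose_mul_mul_mulVec]
  exact mul_pos (hpos _ (by omega) i j) (by simpa using (hR j).inv.dotProduct_mulVec_pos hj)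

end HCRE

theorem modified_hcre_iterates_uniformly_bounded_general
    (n N : ℕ)
    (m : Fin N → ℕ)
    (A : Matrix (Fin n) (Fin n) ℝ) (hA : IsUnit A.det)
    (C : ∀ i : Fin N, Matrix (Fin (m i)) (Fin n) ℝ)
    (hObs : (∑ k ∈ Finset.range n, (A ^ k)ᵀ * (∑ i, (C i)ᵀ * C i) * A ^ k).PosDef)
    (Q : Matrix (Fin n) (Fin n) ℝ) (hQ : Q.PosDef)
    (R : ∀ i : Fin N, Matrix (Fin (m i)) (Fin (m i)) ℝ) (hR : ∀ i, (R i).PosDef)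
    (L : Matrix (Fin N) (Fin N) ℝ)
    (hLnonneg : ∀ i j, 0 ≤ L i j) (hLrow : ∀ i, ∑ j, L i j = 1)
    (hLprim : ∃ k : ℕ, 0 < k ∧ ∀ i j, 0 < (L ^ k) i j)
    (ν : Matrix (Fin N) (Fin N) ℝ)
    (hνnonneg : ∀ i j, 0 ≤ ν i j)
    (hνirred : ∀ i j, ∃ k : ℕ, 1 ≤ k ∧ 0 < (ν ^ k) i j)
    (P0 : Fin N → Matrix (Fin n) (Fin n) ℝ) (hP0 : ∀ i, (P0 i).PosDef)
    (Pseq : ℕ → Fin N → Matrix (Fin n) (Fin n) ℝ)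
    (hinit : Pseq 0 = P0)
    (hiter : ∀ k i, Pseq (k + 1) i =
      A * (∑ j, (L i j • (Pseq k j)⁻¹ + ν i j • ((C j)ᵀ * (R j)⁻¹ * C j)))⁻¹ * Aᵀ + Q) :
    ∃ (kbar : ℕ) (P : Matrix (Fin n) (Fin n) ℝ), P.PosDef ∧
      ∀ i : Fin N, ∀ k : ℕ, kbar ≤ k → (P - Pseq k i).PosSemidef := by
  set G : Fin N → Matrix (Fin n) (Fin n) ℝ := fun j => (C j)ᵀ * (R j)⁻¹ * C j
  have hG : ∀ j, (G j).PosSemidef := fun j => (hR j).inv.posSemidef.transpose_mul_mul_same (C j)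
  have hL : L ∈ rowStochastic ℝ (Fin N) := mem_rowStochastic_iff_sum.2 ⟨hLnonneg, hLrow⟩
  have hPD := HCRE.posDef_of_iterate hL hνnonneg hG hQ (hinit ▸ hP0) hiter
  have hB : (Q⁻¹ + ∑ i, ∑ j, ν i j • G j).PosDef := hQ.inv.add_posSemidef
    (posSemidef_sum _ fun i _ => posSemidef_sum _ fun j _ => (hG j).smul (hνnonneg i j))
  obtain ⟨μ, hμ, hQB⟩ := exists_le_smul_of_posDef hQ.isHermitian
    (hB.inv.mul_mul_transpose_of_isUnit hA)
  have hlow := HCRE.sum_propagatedInfo_le (Y := fun k i => (Pseq (k + 1) i)⁻¹) hLnonneg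
    (by positivity) (fun i => (hPD 1 i).inv.posSemidef.nonneg)
    (HCRE.smul_conj_info_le_inv_iterate hA hL hνnonneg hG hQ hPD hiter hμ hQB)
  obtain ⟨K, -, hK⟩ := hLprim
  have hνcol : ∀ j, ∃ p, 0 < ν p j := fun j =>
    let ⟨_, hk, hkpos⟩ := hνirred j j; exists_apply_pos_of_pow_apply_pos hνnonneg hk hkpos
  have hLν := pow_mul_apply_nonneg hL hνnonneg
  set W := fun i => ∑ s ∈ range (K + n), HCRE.propagatedInfo (1 + μ)⁻¹ A L ν G s i
  have hW : ∀ i, (W i).PosDef := HCRE.posDef_sum_propagatedInfo hA (by positivity) hR hObs hLν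
    (pow_mul_apply_pos hL hνnonneg hνcol hK)
  refine ⟨K + n + 1, ∑ i, (W i)⁻¹ + 1,
    PosDef.posSemidef_add (posSemidef_sum _ fun i _ => (hW i).inv.posSemidef) PosDef.one,
    fun i k hk => ?_⟩
  obtain ⟨t, rfl⟩ : ∃ t, k = t + 1 := ⟨k - 1, by omega⟩
  have hWP : W i ≤ (Pseq (t + 1) i)⁻¹ :=
    (sum_le_sum_of_subset_of_nonneg (range_mono (by omega)) fun s _ _ =>
      (HCRE.propagatedInfo_posSemidef (by positivity) hLν hG s i).nonneg).trans (hlow t i)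
  calc Pseq (t + 1) i ≤ (W i)⁻¹ := le_inv_of_le_inv (hPD (t + 1) i) (hW i) hWP
    _ ≤ ∑ i, (W i)⁻¹ := single_le_sum (fun i _ => (hW i).inv.posSemidef.nonneg) (mem_univ i)
    _ ≤ ∑ i, (W i)⁻¹ + 1 := le_add_of_nonneg_right PosSemidef.one.nonneg

/-- For an irreducible nonnegative matrix `ν`, the iterates of the
modified iterative law `P_{i,k+1} = A (∑_j l_{ij} P_{j,k}⁻¹ + ν_{ij} C_jᵀ R_j⁻¹ C_j)⁻¹ Aᵀ + Q`
are uniformly bounded above (Loewner order) from some time on, for any positive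
definite initial matrices. -/
theorem modified_hcre_iterates_uniformly_bounded
    (n N : ℕ) (hn : 0 < n) (hN : 0 < N)
    (m : Fin N → ℕ) (hm : ∀ i, 0 < m i)
    (A : Matrix (Fin n) (Fin n) ℝ) (hA : IsUnit A.det)
    (C : ∀ i : Fin N, Matrix (Fin (m i)) (Fin n) ℝ)
    (hObs : (∑ k ∈ Finset.range n, (A ^ k)ᵀ * (∑ i, (C i)ᵀ * C i) * A ^ k).PosDef)
    (Q : Matrix (Fin n) (Fin n) ℝ) (hQ : Q.PosDef)
    (R : ∀ i : Fin N, Matrix (Fin (m i)) (Fin (m i)) ℝ) (hR : ∀ i, (R i).PosDef)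
    (L : Matrix (Fin N) (Fin N) ℝ)
    (hLnonneg : ∀ i j, 0 ≤ L i j) (hLrow : ∀ i, ∑ j, L i j = 1)
    (hLprim : ∃ k : ℕ, 0 < k ∧ ∀ i j, 0 < (L ^ k) i j)
    (ν : Matrix (Fin N) (Fin N) ℝ)
    (hνnonneg : ∀ i j, 0 ≤ ν i j)
    (hνirred : ∀ i j, ∃ k : ℕ, 1 ≤ k ∧ 0 < (ν ^ k) i j)
    (P0 : Fin N → Matrix (Fin n) (Fin n) ℝ) (hP0 : ∀ i, (P0 i).PosDef)
    (Pseq : ℕ → Fin N → Matrix (Fin n) (Fin n) ℝ)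
    (hinit : Pseq 0 = P0)
    (hiter : ∀ k i, Pseq (k + 1) i =
      A * (∑ j, (L i j • (Pseq k j)⁻¹ + ν i j • ((C j)ᵀ * (R j)⁻¹ * C j)))⁻¹ * Aᵀ + Q) :
    ∃ (kbar : ℕ) (P : Matrix (Fin n) (Fin n) ℝ), P.PosDef ∧
      ∀ i : Fin N, ∀ k : ℕ, kbar ≤ k → (P - Pseq k i).PosSemidef :=
  modified_hcre_iterates_uniformly_bounded_general n N m A hA C hObs Q hQ R hR L hLnonneg hLrow
    hLprim ν hνnonneg hνirred P0 hP0 Pseq hinit hiter
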